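/- arXiv:1010.2865 — 3 statements merged into one kernel-verified Lean document; each statement's English description precedes it below -/
import Mathlib

section
/- For every w in 𝔇, the vector η(w) is well defined (every square-root argument appearing in its recursive definition is nonnegative), η(w) lies in E(w), f(η(w),w) = 0, and η(w) ≤ v componentwise for every v ∈ E(w). -/
open Filter Topology

noncomputable section

/-- `g_i(w) = (1/2) wᵀ π_i w + (A^C w)_i`. -/
def gfun {m n : ℕ} (π : Fin m → Matrix (Fin n) (Fin n) ℝ)
    (AC : Matrix (Fin m) (Fin n) ℝ) (w : Fin n → ℝ) (i : Fin m) : ℝ :=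
  (1 / 2) * (∑ j, ∑ k, w j * π i j k * w k) + ∑ j, AC i j * w j

/-- `f_i(v,w) = (1/2) v_i² 1_{i∈I} + Σ_{k ≤ i} A^V_{ik} v_k + g_i(w)`. -/
def fRic {m n : ℕ} (I : Finset (Fin m)) (AV : Matrix (Fin m) (Fin m) ℝ)
    (π : Fin m → Matrix (Fin n) (Fin n) ℝ) (AC : Matrix (Fin m) (Fin n) ℝ)
    (v : Fin m → ℝ) (w : Fin n → ℝ) (i : Fin m) : ℝ :=
  (1 / 2) * (v i) ^ 2 * (if i ∈ I then 1 else 0)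
    + (∑ k ∈ Finset.univ.filter (fun k => k ≤ i), AV i k * v k)
    + gfun π AC w i

lemma sum_split {m : ℕ} (i : Fin m) (a x : Fin m → ℝ) :
    ∑ k ∈ Finset.univ.filter (fun k => k ≤ i), a k * x k
      = a i * x i + ∑ k ∈ Finset.univ.filter (fun k => k < i), a k * x k := by
  have h : Finset.univ.filter (fun k => k ≤ i)
      = insert i (Finset.univ.filter (fun k : Fin m => k < i)) := by
    ext k
    simp only [Finset.mem_filter, Finset.mem_univ, true_and, Finset.mem_insert]
    constructor
    · intro h
      rcases lt_or_eq_of_le h with h' | h'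
      · exact Or.inr h'
      · exact Or.inl h'
    · rintro (rfl | h)
      · exact le_rfl
      · exact h.le
  rw [h, Finset.sum_insert (by simp)]

/-- for every `w ∈ 𝔇`, `η(w)` is well defined (all square-root arguments
nonnegative), `η(w) ∈ E(w)`, `f(η(w),w) = 0`, and `η(w) ≤ v` for every `v ∈ E(w)`. -/
theorem stmt0 (m n : ℕ) (hm : 1 ≤ m)
    (I : Finset (Fin m)) (hI : I.Nonempty)
    (AV : Matrix (Fin m) (Fin m) ℝ)
    (hAVtri : ∀ i k : Fin m, i < k → AV i k = 0)
    (hAVdiag : ∀ i : Fin m, AV i i < 0)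
    (hAVoff : ∀ i k : Fin m, i ≠ k → 0 ≤ AV i k)
    (π : Fin m → Matrix (Fin n) (Fin n) ℝ)
    (hπ : ∀ i, (π i).PosSemidef)
    (AC : Matrix (Fin m) (Fin n) ℝ) (AD : Matrix (Fin n) (Fin n) ℝ)
    (η : (Fin n → ℝ) → Fin m → ℝ)
    (hη : ∀ (w : Fin n → ℝ) (i : Fin m), η w i =
      if i ∈ I then
        -AV i i - Real.sqrt ((AV i i) ^ 2 -
          2 * ((∑ k ∈ Finset.univ.filter (fun k => k < i), AV i k * η w k) + gfun π AC w i))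
      else
        -(AV i i)⁻¹ *
          ((∑ k ∈ Finset.univ.filter (fun k => k < i), AV i k * η w k) + gfun π AC w i))
    (w : Fin n → ℝ) (hw : AD.mulVec w = 0)
    (hwD : ∃ v : Fin m → ℝ, ∀ i, fRic I AV π AC v w i ≤ 0) :
    (∀ i ∈ I, 0 ≤ (AV i i) ^ 2 -
        2 * ((∑ k ∈ Finset.univ.filter (fun k => k < i), AV i k * η w k) + gfun π AC w i))
    ∧ (∀ i, fRic I AV π AC (η w) w i ≤ 0)
    ∧ (∀ i, fRic I AV π AC (η w) w i = 0)
    ∧ (∀ v : Fin m → ℝ, (∀ i, fRic I AV π AC v w i ≤ 0) → ∀ i, η w i ≤ v i) := by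
  obtain ⟨v0, hv0⟩ := hwD
  set S : Fin m → ℝ := fun i =>
    (∑ k ∈ Finset.univ.filter (fun k => k < i), AV i k * η w k) + gfun π AC w i with hS
  have key : ∀ N : ℕ, ∀ i : Fin m, (i : ℕ) < N →
      (i ∈ I → 0 ≤ (AV i i) ^ 2 - 2 * S i)
      ∧ fRic I AV π AC (η w) w i = 0
      ∧ ∀ v : Fin m → ℝ, (∀ j, fRic I AV π AC v w j ≤ 0) → η w i ≤ v i := by
    intro N
    induction N with
    | zero => intro i hi; omega
    | succ N ihN =>
      intro i hiN
      have ih : ∀ j : Fin m, j < i →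
          (j ∈ I → 0 ≤ (AV j j) ^ 2 - 2 * S j)
          ∧ fRic I AV π AC (η w) w j = 0
          ∧ ∀ v : Fin m → ℝ, (∀ k, fRic I AV π AC v w k ≤ 0) → η w j ≤ v j := by
        intro j hj
        exact ihN j (by have := Fin.lt_def.mp hj; omega)
      -- monotonicity of the partial sums
      have hsum : ∀ v : Fin m → ℝ, (∀ k, fRic I AV π AC v w k ≤ 0) →
          (∑ k ∈ Finset.univ.filter (fun k => k < i), AV i k * η w k)
            ≤ ∑ k ∈ Finset.univ.filter (fun k => k < i), AV i k * v k := by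
        intro v hv
        refine Finset.sum_le_sum ?_
        intro k hk
        have hk' : k < i := (Finset.mem_filter.mp hk).2
        have hA : 0 ≤ AV i k := hAVoff i k (ne_of_gt hk')
        exact mul_le_mul_of_nonneg_left ((ih k hk').2.2 v hv) hA
      -- the key quadratic inequality for any v ∈ E(w)
      have hq : ∀ v : Fin m → ℝ, (∀ k, fRic I AV π AC v w k ≤ 0) →
          (1 / 2) * (v i) ^ 2 * (if i ∈ I then 1 else 0) + AV i i * v i + S i ≤ 0 := by
        intro v hv
        have h1 := hv i
        rw [fRic, sum_split] at h1
        have h2 := hsum v hv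
        simp only [hS]
        linarith
      clear_value S
      by_cases hi : i ∈ I
      · -- quadratic case
        have hq0 := hq v0 hv0
        rw [if_pos hi] at hq0
        have hD : 0 ≤ (AV i i) ^ 2 - 2 * S i := by
          nlinarith [sq_nonneg (v0 i + AV i i), hq0]
        have hηi : η w i = -AV i i - Real.sqrt ((AV i i) ^ 2 - 2 * S i) := by
          rw [hη w i, if_pos hi, hS]
        have hsq : Real.sqrt ((AV i i) ^ 2 - 2 * S i) ^ 2 = (AV i i) ^ 2 - 2 * S i :=
          Real.sq_sqrt hD
        have hs0 : 0 ≤ Real.sqrt ((AV i i) ^ 2 - 2 * S i) := Real.sqrt_nonneg _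
        refine ⟨fun _ => hD, ?_, ?_⟩
        · rw [fRic, sum_split, if_pos hi, hηi]
          have hSi : S i = (∑ k ∈ Finset.univ.filter (fun k => k < i), AV i k * η w k)
              + gfun π AC w i := congrFun hS i
          linear_combination (1 / 2) * hsq - hSi
        · intro v hv
          have hqv := hq v hv
          rw [if_pos hi] at hqv
          rw [hηi]
          have habs : (v i + AV i i) ^ 2 ≤ Real.sqrt ((AV i i) ^ 2 - 2 * S i) ^ 2 := by
            nlinarith [hqv, hsq]
          nlinarith [habs, hs0]
      · -- linear case
        have ha : AV i i < 0 := hAVdiag i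
        have ha' : AV i i ≠ 0 := ne_of_lt ha
        have hinv : AV i i * (AV i i)⁻¹ = 1 := mul_inv_cancel₀ ha'
        have hηi : η w i = -(AV i i)⁻¹ * S i := by
          rw [hη w i, if_neg hi, hS]
        refine ⟨fun h => absurd h hi, ?_, ?_⟩
        · rw [fRic, sum_split, if_neg hi, hηi]
          have hSi : S i = (∑ k ∈ Finset.univ.filter (fun k => k < i), AV i k * η w k)
              + gfun π AC w i := congrFun hS i
          linear_combination (-(S i)) * hinv - hSi
        · intro v hv
          have hqv := hq v hv
          rw [if_neg hi] at hqv
          have hinvneg : (AV i i)⁻¹ < 0 := inv_lt_zero.mpr ha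
          rw [hηi]
          have h2 : AV i i * v i + S i ≤ 0 := by nlinarith [hqv]
          have hcalc : v i - (-(AV i i)⁻¹ * S i) = (AV i i)⁻¹ * (AV i i * v i + S i) := by
            field_simp
            ring
          have h3 : 0 ≤ (AV i i)⁻¹ * (AV i i * v i + S i) := by
            nlinarith [mul_nonneg (neg_nonneg.mpr hinvneg.le) (neg_nonneg.mpr h2)]
          linarith [hcalc, h3]
  have keyall : ∀ i : Fin m,
      (i ∈ I → 0 ≤ (AV i i) ^ 2 - 2 * S i)
      ∧ fRic I AV π AC (η w) w i = 0
      ∧ ∀ v : Fin m → ℝ, (∀ j, fRic I AV π AC v w j ≤ 0) → η w i ≤ v i :=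
    fun i => key m i i.isLt
  refine ⟨fun i hi => (keyall i).1 hi, fun i => le_of_eq (keyall i).2.1,
    fun i => (keyall i).2.1, fun v hv i => (keyall i).2.2 v hv⟩

end
end

section
/- The set 𝔇 is a nonempty closed convex subset of Ker A^D containing 0, the set 𝔇° is a convex subset of Ker A^D that is open in Ker A^D and contains 0, the map η is a convex function on 𝔇, η is continuous on 𝔇, and η is twice continuously differentiable on 𝔇°. -/
/-!
Write `c_i(w) = Σ_{k<i} A^V_{ik} η_k(w) + g_i(w)`, so that `η_i(w)` is the smaller root of
`x ↦ ½ x² 1_{i∈I} + A^V_{ii} x + c_i(w)`. Because the off-diagonal entries of `A^V` are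
nonnegative, an induction along `i` shows that every `v ∈ E(w)` dominates `η(w)` componentwise
and forces the discriminants `(A^V_{ii})² - 2 c_i(w)`, `i ∈ I`, to be nonnegative, positive if
`v ∈ E°(w)`. Conversely `η(w) ∈ E(w)` once they are nonnegative, and when they are positive
the perturbation `η(w) + (ε^(m-i))_i` lies in `E°(w)` for small `ε > 0`. Hence `𝔇` and `𝔇°`
are cut out of `Ker A^D` by non-strict resp. strict inequalities on continuous functions.

Since the `π_i` are positive semidefinite, `f` is jointly convex in `(v, w)`: `𝔇` and `𝔇°` are
projections of convex sets, and `η_i(w)`, the least `i`-th coordinate of a point of `E(w)`, is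
convex. Smoothness holds because `η` is built from `g` by arithmetic and square roots of
positive quantities.
-/

open Filter Topology

noncomputable section

/-- `E(w) = {v : f_i(v,w) ≤ 0 ∀ i}`. -/
def Eset {m n : ℕ} (I : Finset (Fin m)) (AV : Matrix (Fin m) (Fin m) ℝ)
    (π : Fin m → Matrix (Fin n) (Fin n) ℝ) (AC : Matrix (Fin m) (Fin n) ℝ)
    (w : Fin n → ℝ) : Set (Fin m → ℝ) :=
  {v | ∀ i, fRic I AV π AC v w i ≤ 0}

/-- `E°(w) = {v : f_i(v,w) < 0 ∀ i}`. -/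
def EsetO {m n : ℕ} (I : Finset (Fin m)) (AV : Matrix (Fin m) (Fin m) ℝ)
    (π : Fin m → Matrix (Fin n) (Fin n) ℝ) (AC : Matrix (Fin m) (Fin n) ℝ)
    (w : Fin n → ℝ) : Set (Fin m → ℝ) :=
  {v | ∀ i, fRic I AV π AC v w i < 0}

/-- `𝔇 = {w ∈ Ker A^D : E(w) ≠ ∅}`. -/
def Dset {m n : ℕ} (I : Finset (Fin m)) (AV : Matrix (Fin m) (Fin m) ℝ)
    (π : Fin m → Matrix (Fin n) (Fin n) ℝ) (AC : Matrix (Fin m) (Fin n) ℝ)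
    (AD : Matrix (Fin n) (Fin n) ℝ) : Set (Fin n → ℝ) :=
  {w | AD.mulVec w = 0 ∧ (Eset I AV π AC w).Nonempty}

/-- `𝔇° = {w ∈ Ker A^D : E°(w) ≠ ∅}`. -/
def DsetO {m n : ℕ} (I : Finset (Fin m)) (AV : Matrix (Fin m) (Fin m) ℝ)
    (π : Fin m → Matrix (Fin n) (Fin n) ℝ) (AC : Matrix (Fin m) (Fin n) ℝ)
    (AD : Matrix (Fin n) (Fin n) ℝ) : Set (Fin n → ℝ) :=
  {w | AD.mulVec w = 0 ∧ (EsetO I AV π AC w).Nonempty}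

open Matrix

def riccatiPoly (q : Prop) [Decidable q] (a c x : ℝ) : ℝ :=
  1 / 2 * x ^ 2 * (if q then 1 else 0) + a * x + c

/-- The smaller root of `riccatiPoly q a c` (the only one if `¬ q`). -/
def lowerRoot (q : Prop) [Decidable q] (a c : ℝ) : ℝ :=
  if q then -a - √(a ^ 2 - 2 * c) else -a⁻¹ * c

section Scalar

variable {q : Prop} [Decidable q] {a c x : ℝ}

lemma lowerRoot_le_of_riccatiPoly_nonpos (ha : a < 0) (h : riccatiPoly q a c x ≤ 0) :
    (q → 0 ≤ a ^ 2 - 2 * c) ∧ lowerRoot q a c ≤ x := by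
  unfold riccatiPoly at h
  unfold lowerRoot
  split_ifs at h ⊢ with hq
  · have hsq : (x + a) ^ 2 ≤ a ^ 2 - 2 * c := by linarith
    exact ⟨fun _ => (sq_nonneg _).trans hsq,
      by linarith [neg_abs_le (x + a), Real.abs_le_sqrt hsq]⟩
  · refine ⟨fun h => absurd h hq, ?_⟩
    rw [neg_mul, inv_mul_eq_div, neg_le, le_div_iff_of_neg ha]
    linarith

lemma disc_pos_of_riccatiPoly_neg (hq : q) (h : riccatiPoly q a c x < 0) :
    0 < a ^ 2 - 2 * c := by
  simp only [riccatiPoly, if_pos hq] at h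
  nlinarith [sq_nonneg (x + a)]

lemma riccatiPoly_lowerRoot (ha : a ≠ 0) (h : q → 0 ≤ a ^ 2 - 2 * c) :
    riccatiPoly q a c (lowerRoot q a c) = 0 := by
  unfold riccatiPoly lowerRoot
  split_ifs with hq
  · linear_combination (1 / 2) * Real.sq_sqrt (h hq)
  · field_simp
    ring

lemma riccatiPoly_add (d r t : ℝ) :
    riccatiPoly q a (c + d) (r + t) = riccatiPoly q a c r
      + (((if q then r else 0) + a) * t + (1 / 2 * if q then 1 else 0) * t ^ 2 + d) := by
  unfold riccatiPoly
  split_ifs <;> ring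

lemma slope_lowerRoot_neg (ha : a < 0) (h : q → 0 < a ^ 2 - 2 * c) :
    (if q then lowerRoot q a c else 0) + a < 0 := by
  unfold lowerRoot
  split_ifs with hq
  · linarith [Real.sqrt_pos.2 (h hq)]
  · linarith

lemma continuous_lowerRoot (q : Prop) [Decidable q] (a : ℝ) : Continuous (lowerRoot q a) := by
  unfold lowerRoot
  split_ifs <;> fun_prop

end Scalar

lemma exists_forall_lowerTriangular_neg {m : ℕ} (s q : Fin m → ℝ) (A : Matrix (Fin m) (Fin m) ℝ)
    (hs : ∀ i, s i < 0) : ∃ δ : Fin m → ℝ, ∀ i,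
      s i * δ i + q i * δ i ^ 2 + ∑ k ∈ Finset.univ.filter (fun k => k < i), A i k * δ k < 0 := by
  -- with `δ_k = ε ^ (m - k)`, row `i` is `ε ^ (m - i) * φ i ε`, and `φ i ε → s i < 0` as `ε → 0`
  set φ : Fin m → ℝ → ℝ := fun i ε => s i + q i * ε ^ (m - i : ℕ)
    + ∑ k ∈ Finset.univ.filter (fun k => k < i), A i k * ε ^ (i - k : ℕ)
  have hφ : ∀ i, ∀ᶠ ε in 𝓝 0, φ i ε < 0 := by
    intro i
    have h0 : φ i 0 = s i := by
      have hpos : m - (i : ℕ) ≠ 0 := by omega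
      simp only [φ, zero_pow hpos, mul_zero, add_zero, add_eq_left]
      exact Finset.sum_eq_zero fun k hk => by
        rw [zero_pow (by have : k < i := (Finset.mem_filter.1 hk).2; omega), mul_zero]
    have hcont : Continuous (φ i) := by fun_prop
    exact hcont.continuousAt.eventually_lt continuousAt_const (h0 ▸ hs i)
  obtain ⟨ε, hεφ, hε⟩ := (((Filter.eventually_all.2 hφ).filter_mono nhdsWithin_le_nhds).and
    (self_mem_nhdsWithin (s := Set.Ioi (0 : ℝ)))).exists
  refine ⟨fun k => ε ^ (m - k : ℕ), fun i => ?_⟩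
  have hfactor : s i * ε ^ (m - i : ℕ) + q i * (ε ^ (m - i : ℕ)) ^ 2
      + ∑ k ∈ Finset.univ.filter (fun k => k < i), A i k * ε ^ (m - k : ℕ)
      = ε ^ (m - i : ℕ) * φ i ε := by
    simp only [φ, mul_add, Finset.mul_sum]
    congr 1
    · ring
    · refine Finset.sum_congr rfl fun k hk => ?_
      have hki : (k : ℕ) < i := (Finset.mem_filter.1 hk).2
      rw [show m - (k : ℕ) = (m - i) + (i - k) by omega, pow_add]
      ring
  rw [hfactor]
  exact mul_neg_of_pos_of_neg (pow_pos hε _) (hεφ i)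

lemma Matrix.PosSemidef.convexOn_dotProduct_mulVec {ι : Type*} [Fintype ι]
    {P : Matrix ι ι ℝ} (hP : P.PosSemidef) : ConvexOn ℝ Set.univ fun x => x ⬝ᵥ (P *ᵥ x) := by
  refine ⟨convex_univ, fun x _ y _ a b ha hb hab => ?_⟩
  have hxy := hP.dotProduct_mulVec_nonneg (x - y)
  simp only [star_trivial, mulVec_sub, sub_dotProduct, dotProduct_sub] at hxy
  simp only [mulVec_add, mulVec_smul, add_dotProduct, dotProduct_add, smul_dotProduct,
    dotProduct_smul, smul_eq_mul]
  obtain rfl : b = 1 - a := by linarith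
  nlinarith [mul_nonneg (mul_nonneg ha hb) hxy]

lemma sum_sum_mul_mul_eq_dotProduct_mulVec {ι : Type*} [Fintype ι] (P : Matrix ι ι ℝ)
    (x : ι → ℝ) : ∑ j, ∑ k, x j * P j k * x k = x ⬝ᵥ (P *ᵥ x) := by
  simp [dotProduct, mulVec, Finset.mul_sum, mul_assoc]

lemma sum_mul_smul_add_smul {ι : Type*} (s : Finset ι) (c x y : ι → ℝ) (a b : ℝ) :
    ∑ k ∈ s, c k * (a • x + b • y) k = a * ∑ k ∈ s, c k * x k + b * ∑ k ∈ s, c k * y k := by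
  simp only [Pi.add_apply, Pi.smul_apply, smul_eq_mul, Finset.mul_sum, ← Finset.sum_add_distrib]
  exact Finset.sum_congr rfl fun k _ => by ring

section Riccati

variable {m n : ℕ} {I : Finset (Fin m)} {AV : Matrix (Fin m) (Fin m) ℝ}
  {π : Fin m → Matrix (Fin n) (Fin n) ℝ} {AC : Matrix (Fin m) (Fin n) ℝ}
  {AD : Matrix (Fin n) (Fin n) ℝ} {η : (Fin n → ℝ) → Fin m → ℝ}

def lowerSum (AV : Matrix (Fin m) (Fin m) ℝ) (v : Fin m → ℝ) (i : Fin m) : ℝ :=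
  ∑ k ∈ Finset.univ.filter (fun k => k < i), AV i k * v k

lemma lowerSum_add (x y : Fin m → ℝ) (i : Fin m) :
    lowerSum AV (x + y) i = lowerSum AV x i + lowerSum AV y i := by
  simp only [lowerSum, Pi.add_apply, mul_add, Finset.sum_add_distrib]

lemma lowerSum_le_lowerSum (hAVoff : ∀ i k : Fin m, i ≠ k → 0 ≤ AV i k) {x y : Fin m → ℝ}
    {i : Fin m} (h : ∀ k < i, x k ≤ y k) : lowerSum AV x i ≤ lowerSum AV y i :=
  Finset.sum_le_sum fun k hk =>
    have hki : k < i := (Finset.mem_filter.1 hk).2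
    mul_le_mul_of_nonneg_left (h k hki) (hAVoff i k hki.ne')

lemma fRic_eq (v : Fin m → ℝ) (w : Fin n → ℝ) (i : Fin m) :
    fRic I AV π AC v w i
      = riccatiPoly (i ∈ I) (AV i i) (lowerSum AV v i + gfun π AC w i) (v i) := by
  have hle : Finset.univ.filter (fun k => k ≤ i)
      = insert i (Finset.univ.filter (fun k => k < i)) := by
    ext k
    simp [le_iff_lt_or_eq, or_comm]
  rw [fRic, riccatiPoly, lowerSum, hle, Finset.sum_insert (by simp)]
  ring

def IsEta (I : Finset (Fin m)) (AV : Matrix (Fin m) (Fin m) ℝ)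
    (π : Fin m → Matrix (Fin n) (Fin n) ℝ) (AC : Matrix (Fin m) (Fin n) ℝ)
    (η : (Fin n → ℝ) → Fin m → ℝ) : Prop :=
  ∀ w i, η w i = lowerRoot (i ∈ I) (AV i i) (lowerSum AV (η w) i + gfun π AC w i)

def disc (AV : Matrix (Fin m) (Fin m) ℝ) (π : Fin m → Matrix (Fin n) (Fin n) ℝ)
    (AC : Matrix (Fin m) (Fin n) ℝ) (η : (Fin n → ℝ) → Fin m → ℝ) (w : Fin n → ℝ)
    (i : Fin m) : ℝ :=
  AV i i ^ 2 - 2 * (lowerSum AV (η w) i + gfun π AC w i)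

lemma disc_nonneg_and_eta_le_of_mem_Eset (hAVdiag : ∀ i : Fin m, AV i i < 0)
    (hAVoff : ∀ i k : Fin m, i ≠ k → 0 ≤ AV i k) (hη : IsEta I AV π AC η) {w : Fin n → ℝ}
    {v : Fin m → ℝ} (hv : v ∈ Eset I AV π AC w) (i : Fin m) :
    (i ∈ I → 0 ≤ disc AV π AC η w i) ∧ η w i ≤ v i := by
  induction i using WellFoundedLT.induction with
  | ind i ih =>
    have hsum : lowerSum AV (η w) i ≤ lowerSum AV v i :=
      lowerSum_le_lowerSum hAVoff fun k hk => (ih k hk).2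
    have hfv : riccatiPoly (i ∈ I) (AV i i) (lowerSum AV (η w) i + gfun π AC w i) (v i) ≤ 0 := by
      have := hv i
      rw [fRic_eq] at this
      unfold riccatiPoly at this ⊢
      linarith
    rw [hη w i]
    exact lowerRoot_le_of_riccatiPoly_nonpos (hAVdiag i) hfv

lemma eta_le_of_mem_Eset (hAVdiag : ∀ i : Fin m, AV i i < 0)
    (hAVoff : ∀ i k : Fin m, i ≠ k → 0 ≤ AV i k) (hη : IsEta I AV π AC η) {w : Fin n → ℝ}
    {v : Fin m → ℝ} (hv : v ∈ Eset I AV π AC w) (i : Fin m) : η w i ≤ v i :=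
  (disc_nonneg_and_eta_le_of_mem_Eset hAVdiag hAVoff hη hv i).2

lemma fRic_eta_eq_zero (hAVdiag : ∀ i : Fin m, AV i i < 0) (hη : IsEta I AV π AC η)
    {w : Fin n → ℝ} {i : Fin m} (h : i ∈ I → 0 ≤ disc AV π AC η w i) :
    fRic I AV π AC (η w) w i = 0 := by
  have := riccatiPoly_lowerRoot (q := i ∈ I) (hAVdiag i).ne h
  rwa [← hη w i, ← fRic_eq] at this

lemma disc_pos_of_mem_EsetO (hAVdiag : ∀ i : Fin m, AV i i < 0)
    (hAVoff : ∀ i k : Fin m, i ≠ k → 0 ≤ AV i k) (hη : IsEta I AV π AC η) {w : Fin n → ℝ}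
    {v : Fin m → ℝ} (hv : v ∈ EsetO I AV π AC w) {i : Fin m} (hi : i ∈ I) :
    0 < disc AV π AC η w i := by
  have hsum : lowerSum AV (η w) i ≤ lowerSum AV v i :=
    lowerSum_le_lowerSum hAVoff fun k _ =>
      eta_le_of_mem_Eset hAVdiag hAVoff hη (fun j => (hv j).le) k
  refine disc_pos_of_riccatiPoly_neg (x := v i) hi ?_
  have := hv i
  rw [fRic_eq] at this
  unfold riccatiPoly at this ⊢
  linarith

lemma EsetO_nonempty_of_disc_pos (hAVdiag : ∀ i : Fin m, AV i i < 0) (hη : IsEta I AV π AC η)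
    {w : Fin n → ℝ} (hd : ∀ i ∈ I, 0 < disc AV π AC η w i) :
    (EsetO I AV π AC w).Nonempty := by
  obtain ⟨δ, hδ⟩ := exists_forall_lowerTriangular_neg
    (fun i => (if i ∈ I then η w i else 0) + AV i i) (fun i => 1 / 2 * if i ∈ I then 1 else 0)
    AV fun i => by rw [hη w i]; exact slope_lowerRoot_neg (hAVdiag i) (hd i)
  refine ⟨η w + δ, fun i => ?_⟩
  have h0 := fRic_eta_eq_zero hAVdiag hη (fun hi => (hd i hi).le) (i := i)
  rw [fRic_eq] at h0 ⊢
  rw [lowerSum_add, add_right_comm, Pi.add_apply, riccatiPoly_add, h0, zero_add]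
  exact hδ i

lemma zero_mem_DsetO (hAVdiag : ∀ i : Fin m, AV i i < 0) :
    (0 : Fin n → ℝ) ∈ DsetO I AV π AC AD := by
  obtain ⟨δ, hδ⟩ := exists_forall_lowerTriangular_neg
    (fun i => AV i i) (fun i => 1 / 2 * if i ∈ I then 1 else 0) AV hAVdiag
  refine ⟨mulVec_zero AD, δ, fun i => ?_⟩
  have hg : gfun π AC 0 i = 0 := by simp [gfun]
  rw [fRic_eq, hg, add_zero, riccatiPoly, lowerSum]
  linarith [hδ i]

lemma mem_Dset_iff (hAVdiag : ∀ i : Fin m, AV i i < 0)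
    (hAVoff : ∀ i k : Fin m, i ≠ k → 0 ≤ AV i k) (hη : IsEta I AV π AC η) {w : Fin n → ℝ} :
    w ∈ Dset I AV π AC AD ↔ AD.mulVec w = 0 ∧ ∀ i ∈ I, 0 ≤ disc AV π AC η w i :=
  and_congr_right fun _ =>
    ⟨fun ⟨_, hv⟩ i hi => (disc_nonneg_and_eta_le_of_mem_Eset hAVdiag hAVoff hη hv i).1 hi,
      fun hd => ⟨η w, fun i => (fRic_eta_eq_zero hAVdiag hη (hd i)).le⟩⟩

lemma mem_DsetO_iff (hAVdiag : ∀ i : Fin m, AV i i < 0)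
    (hAVoff : ∀ i k : Fin m, i ≠ k → 0 ≤ AV i k) (hη : IsEta I AV π AC η) {w : Fin n → ℝ} :
    w ∈ DsetO I AV π AC AD ↔ AD.mulVec w = 0 ∧ ∀ i ∈ I, 0 < disc AV π AC η w i :=
  and_congr_right fun _ =>
    ⟨fun ⟨_, hv⟩ _ hi => disc_pos_of_mem_EsetO hAVdiag hAVoff hη hv hi,
      EsetO_nonempty_of_disc_pos hAVdiag hη⟩

lemma contDiff_gfun {k : WithTop ℕ∞} (i : Fin m) :
    ContDiff ℝ k fun w : Fin n → ℝ => gfun π AC w i := by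
  unfold gfun
  fun_prop

lemma continuous_eta_apply (hη : IsEta I AV π AC η) (i : Fin m) :
    Continuous fun w => η w i := by
  induction i using WellFoundedLT.induction with
  | ind i ih =>
    simp_rw [hη _ i]
    refine (continuous_lowerRoot _ _).comp ((continuous_finsetSum _ fun k hk => ?_).add
      (contDiff_gfun (k := 0) i).continuous)
    exact continuous_const.mul (ih k (Finset.mem_filter.1 hk).2)

lemma continuous_disc (hη : IsEta I AV π AC η) (i : Fin m) :
    Continuous fun w => disc AV π AC η w i :=
  continuous_const.sub (continuous_const.mul ((continuous_finsetSum _ fun k _ =>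
    continuous_const.mul (continuous_eta_apply hη k)).add (contDiff_gfun (k := 0) i).continuous))

lemma contDiffOn_eta_apply {k : WithTop ℕ∞} (hη : IsEta I AV π AC η) (i : Fin m) :
    ContDiffOn ℝ k (fun w => η w i) {w | ∀ j ∈ I, 0 < disc AV π AC η w j} := by
  induction i using WellFoundedLT.induction with
  | ind i ih =>
    have hc : ContDiffOn ℝ k (fun w => lowerSum AV (η w) i + gfun π AC w i)
        {w | ∀ j ∈ I, 0 < disc AV π AC η w j} :=
      (ContDiffOn.sum fun l hl => contDiffOn_const.mul (ih l (Finset.mem_filter.1 hl).2)).add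
        (contDiff_gfun i).contDiffOn
    simp_rw [hη _ i, lowerRoot]
    split_ifs with hi
    · exact contDiffOn_const.sub ((contDiffOn_const.sub (contDiffOn_const.mul hc)).sqrt
        fun w hw => (hw i hi).ne')
    · exact contDiffOn_const.mul hc

lemma isClosed_Dset (hAVdiag : ∀ i : Fin m, AV i i < 0)
    (hAVoff : ∀ i k : Fin m, i ≠ k → 0 ≤ AV i k) (hη : IsEta I AV π AC η) :
    IsClosed (Dset I AV π AC AD) := by
  have : Dset I AV π AC AD
      = {w | AD.mulVec w = 0} ∩ ⋂ i ∈ I, {w | 0 ≤ disc AV π AC η w i} := by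
    ext w
    simp [mem_Dset_iff hAVdiag hAVoff hη]
  rw [this]
  exact (isClosed_eq AD.mulVecLin.continuous_of_finiteDimensional continuous_const).inter
    (isClosed_biInter fun i _ => isClosed_le continuous_const (continuous_disc hη i))

lemma isOpen_preimage_val_DsetO (hAVdiag : ∀ i : Fin m, AV i i < 0)
    (hAVoff : ∀ i k : Fin m, i ≠ k → 0 ≤ AV i k) (hη : IsEta I AV π AC η) :
    IsOpen ((Subtype.val : {w : Fin n → ℝ // AD.mulVec w = 0} → (Fin n → ℝ)) ⁻¹'
      DsetO I AV π AC AD) := by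
  have : (Subtype.val : {w : Fin n → ℝ // AD.mulVec w = 0} → (Fin n → ℝ)) ⁻¹'
      DsetO I AV π AC AD = Subtype.val ⁻¹' ⋂ i ∈ I, {w | 0 < disc AV π AC η w i} := by
    ext ⟨w, hw⟩
    simp [mem_DsetO_iff hAVdiag hAVoff hη, hw]
  rw [this]
  exact (isOpen_biInter_finset fun i _ =>
    isOpen_lt continuous_const (continuous_disc hη i)).preimage continuous_subtype_val

lemma convexOn_fRic {i : Fin m} (hπ : (π i).PosSemidef) :
    ConvexOn ℝ Set.univ fun p : (Fin m → ℝ) × (Fin n → ℝ) => fRic I AV π AC p.1 p.2 i := by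
  refine ⟨convex_univ, ?_⟩
  rintro ⟨v₁, w₁⟩ - ⟨v₂, w₂⟩ - a b ha hb hab
  have hsq := (even_two.convexOn_pow (𝕜 := ℝ)).2 (Set.mem_univ (v₁ i)) (Set.mem_univ (v₂ i))
    ha hb hab
  have hQ := hπ.convexOn_dotProduct_mulVec.2 (Set.mem_univ w₁) (Set.mem_univ w₂) ha hb hab
  have hI : (0 : ℝ) ≤ if i ∈ I then 1 else 0 := by split_ifs <;> norm_num
  simp only [fRic, gfun, sum_sum_mul_mul_eq_dotProduct_mulVec, Prod.smul_mk, Prod.mk_add_mk]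
  simp only [sum_mul_smul_add_smul]
  simp only [Pi.add_apply, Pi.smul_apply, smul_eq_mul] at hsq hQ ⊢
  nlinarith [mul_le_mul_of_nonneg_right hsq hI]

lemma convex_mulVec_eq_zero_and_exists {S : Set ((Fin m → ℝ) × (Fin n → ℝ))}
    (hS : Convex ℝ S) : Convex ℝ {w | AD.mulVec w = 0 ∧ ∃ v, (v, w) ∈ S} := by
  have hker : Convex ℝ {w : Fin n → ℝ | AD.mulVec w = 0} := (LinearMap.ker AD.mulVecLin).convex
  convert hker.inter (hS.linear_image (LinearMap.snd ℝ _ _)) using 1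
  ext w
  simp

lemma convex_Dset (hπ : ∀ i, (π i).PosSemidef) : Convex ℝ (Dset I AV π AC AD) :=
  convex_mulVec_eq_zero_and_exists (S := {p | ∀ i, fRic I AV π AC p.1 p.2 i ≤ 0}) <| by
    simpa only [Set.ofPred_forall, Set.mem_univ, true_and] using
      convex_iInter fun i => (convexOn_fRic (I := I) (AV := AV) (AC := AC) (hπ i)).convex_le 0

lemma convex_DsetO (hπ : ∀ i, (π i).PosSemidef) : Convex ℝ (DsetO I AV π AC AD) :=
  convex_mulVec_eq_zero_and_exists (S := {p | ∀ i, fRic I AV π AC p.1 p.2 i < 0}) <| by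
    simpa only [Set.ofPred_forall, Set.mem_univ, true_and] using
      convex_iInter fun i => (convexOn_fRic (I := I) (AV := AV) (AC := AC) (hπ i)).convex_lt 0

lemma convexOn_eta_apply (hAVdiag : ∀ i : Fin m, AV i i < 0)
    (hAVoff : ∀ i k : Fin m, i ≠ k → 0 ≤ AV i k) (hπ : ∀ i, (π i).PosSemidef)
    (hη : IsEta I AV π AC η) (i : Fin m) : ConvexOn ℝ (Dset I AV π AC AD) fun w => η w i := by
  refine ⟨convex_Dset hπ, fun w₁ hw₁ w₂ hw₂ a b ha hb hab => ?_⟩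
  have hzero : ∀ w ∈ Dset I AV π AC AD, ∀ j, fRic I AV π AC (η w) w j = 0 := fun w hw j =>
    fRic_eta_eq_zero hAVdiag hη ((mem_Dset_iff hAVdiag hAVoff hη).1 hw |>.2 j)
  have hmem : a • η w₁ + b • η w₂ ∈ Eset I AV π AC (a • w₁ + b • w₂) := fun j => by
    have := (convexOn_fRic (I := I) (AV := AV) (AC := AC) (hπ j)).2 (Set.mem_univ (η w₁, w₁))
      (Set.mem_univ (η w₂, w₂)) ha hb hab
    simpa only [Prod.smul_mk, Prod.mk_add_mk, hzero w₁ hw₁, hzero w₂ hw₂, smul_zero,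
      add_zero] using this
  simpa using eta_le_of_mem_Eset hAVdiag hAVoff hη hmem i

end Riccati

theorem stmt1_general (m n : ℕ)
    (I : Finset (Fin m))
    (AV : Matrix (Fin m) (Fin m) ℝ)
    (hAVdiag : ∀ i : Fin m, AV i i < 0)
    (hAVoff : ∀ i k : Fin m, i ≠ k → 0 ≤ AV i k)
    (π : Fin m → Matrix (Fin n) (Fin n) ℝ)
    (hπ : ∀ i, (π i).PosSemidef)
    (AC : Matrix (Fin m) (Fin n) ℝ) (AD : Matrix (Fin n) (Fin n) ℝ)
    (η : (Fin n → ℝ) → Fin m → ℝ)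
    (hη : ∀ (w : Fin n → ℝ) (i : Fin m), η w i =
      if i ∈ I then
        -AV i i - Real.sqrt ((AV i i) ^ 2 -
          2 * ((∑ k ∈ Finset.univ.filter (fun k => k < i), AV i k * η w k) + gfun π AC w i))
      else
        -(AV i i)⁻¹ *
          ((∑ k ∈ Finset.univ.filter (fun k => k < i), AV i k * η w k) + gfun π AC w i)) :
    (Dset I AV π AC AD).Nonempty
    ∧ (0 : Fin n → ℝ) ∈ Dset I AV π AC AD
    ∧ IsClosed (Dset I AV π AC AD)
    ∧ Convex ℝ (Dset I AV π AC AD)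
    ∧ Dset I AV π AC AD ⊆ {w | AD.mulVec w = 0}
    ∧ (0 : Fin n → ℝ) ∈ DsetO I AV π AC AD
    ∧ Convex ℝ (DsetO I AV π AC AD)
    ∧ DsetO I AV π AC AD ⊆ {w | AD.mulVec w = 0}
    ∧ IsOpen ((Subtype.val : {w : Fin n → ℝ // AD.mulVec w = 0} → (Fin n → ℝ)) ⁻¹'
        DsetO I AV π AC AD)
    ∧ (∀ i : Fin m, ConvexOn ℝ (Dset I AV π AC AD) (fun w => η w i))
    ∧ ContinuousOn η (Dset I AV π AC AD)
    ∧ ContDiffOn ℝ 2 η (DsetO I AV π AC AD) := by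
  have hrec : IsEta I AV π AC η := hη
  have h0O : (0 : Fin n → ℝ) ∈ DsetO I AV π AC AD := zero_mem_DsetO hAVdiag
  have h0 : (0 : Fin n → ℝ) ∈ Dset I AV π AC AD :=
    ⟨h0O.1, h0O.2.imp fun _ hv i => (hv i).le⟩
  have hDO : DsetO I AV π AC AD ⊆ {w | ∀ i ∈ I, 0 < disc AV π AC η w i} := fun _ hw =>
    ((mem_DsetO_iff hAVdiag hAVoff hrec).1 hw).2
  exact ⟨⟨0, h0⟩, h0, isClosed_Dset hAVdiag hAVoff hrec, convex_Dset hπ, fun _ hw => hw.1, h0O,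
    convex_DsetO hπ, fun _ hw => hw.1, isOpen_preimage_val_DsetO hAVdiag hAVoff hrec,
    convexOn_eta_apply hAVdiag hAVoff hπ hrec,
    (continuous_pi (continuous_eta_apply hrec)).continuousOn,
    (contDiffOn_pi.2 fun i => contDiffOn_eta_apply hrec i).mono hDO⟩

/-- `𝔇` is a nonempty closed convex subset of `Ker A^D` containing `0`,
`𝔇°` is a convex subset of `Ker A^D`, open in `Ker A^D`, containing `0`;
`η` is (componentwise) convex on `𝔇`, continuous on `𝔇`, and `C²` on `𝔇°`. -/
theorem stmt1 (m n : ℕ) (hm : 1 ≤ m)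
    (I : Finset (Fin m)) (hI : I.Nonempty)
    (AV : Matrix (Fin m) (Fin m) ℝ)
    (hAVtri : ∀ i k : Fin m, i < k → AV i k = 0)
    (hAVdiag : ∀ i : Fin m, AV i i < 0)
    (hAVoff : ∀ i k : Fin m, i ≠ k → 0 ≤ AV i k)
    (π : Fin m → Matrix (Fin n) (Fin n) ℝ)
    (hπ : ∀ i, (π i).PosSemidef)
    (AC : Matrix (Fin m) (Fin n) ℝ) (AD : Matrix (Fin n) (Fin n) ℝ)
    (η : (Fin n → ℝ) → Fin m → ℝ)
    (hη : ∀ (w : Fin n → ℝ) (i : Fin m), η w i =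
      if i ∈ I then
        -AV i i - Real.sqrt ((AV i i) ^ 2 -
          2 * ((∑ k ∈ Finset.univ.filter (fun k => k < i), AV i k * η w k) + gfun π AC w i))
      else
        -(AV i i)⁻¹ *
          ((∑ k ∈ Finset.univ.filter (fun k => k < i), AV i k * η w k) + gfun π AC w i)) :
    (Dset I AV π AC AD).Nonempty
    ∧ (0 : Fin n → ℝ) ∈ Dset I AV π AC AD
    ∧ IsClosed (Dset I AV π AC AD)
    ∧ Convex ℝ (Dset I AV π AC AD)
    ∧ Dset I AV π AC AD ⊆ {w | AD.mulVec w = 0}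
    ∧ (0 : Fin n → ℝ) ∈ DsetO I AV π AC AD
    ∧ Convex ℝ (DsetO I AV π AC AD)
    ∧ DsetO I AV π AC AD ⊆ {w | AD.mulVec w = 0}
    ∧ IsOpen ((Subtype.val : {w : Fin n → ℝ // AD.mulVec w = 0} → (Fin n → ℝ)) ⁻¹'
        DsetO I AV π AC AD)
    ∧ (∀ i : Fin m, ConvexOn ℝ (Dset I AV π AC AD) (fun w => η w i))
    ∧ ContinuousOn η (Dset I AV π AC AD)
    ∧ ContDiffOn ℝ 2 η (DsetO I AV π AC AD) :=
  stmt1_general m n I AV hAVdiag hAVoff π hπ AC AD η hη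

end
end

section
/- For each T > 0 and w ∈ ℝ^n, the equilibrium points of the transformed system (quadODE) are exactly the points (ν, 0) ∈ ℝ^{m+1} with ν_i ∈ {0, 2/T} for i ∈ I and ν_i = 0 for i ∉ I. Every equilibrium point is hyperbolic (all eigenvalues of the Jacobian of the vector field at the equilibrium equal 1 or −1), and the origin is the unique asymptotically stable equilibrium point of the system. -/
open Filter Topology

noncomputable section

/-- The vector field of the transformed system (quadODE) on `ℝ^{m+1}`. -/
def Fq {m n : ℕ} (I : Finset (Fin m)) (AV : Matrix (Fin m) (Fin m) ℝ)
    (π : Fin m → Matrix (Fin n) (Fin n) ℝ) (AC : Matrix (Fin m) (Fin n) ℝ)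
    (T : ℝ) (w : Fin n → ℝ) (x : Fin (m + 1) → ℝ) (i : Fin (m + 1)) : ℝ :=
  if h : (i : ℕ) < m then
    (T / 2) * (x i) ^ 2 * (if (⟨i.1, h⟩ : Fin m) ∈ I then 1 else 0) - x i
      + T * (∑ k ∈ Finset.univ.filter (fun k : Fin m => k ≤ (⟨i.1, h⟩ : Fin m)),
          AV ⟨i.1, h⟩ k * x k.castSucc) * x (Fin.last m)
      + T * (x (Fin.last m)) ^ 2 * gfun π AC w ⟨i.1, h⟩
  else
    -x i

/-- Stable set `W^s_ν(w,T)` of an equilibrium `(ν,0)` of (quadODE): initial conditions `v`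
such that the (quadODE) solution starting at `(v,1)` is global and converges to `(ν,0)`. -/
def WsQ {m n : ℕ} (I : Finset (Fin m)) (AV : Matrix (Fin m) (Fin m) ℝ)
    (π : Fin m → Matrix (Fin n) (Fin n) ℝ) (AC : Matrix (Fin m) (Fin n) ℝ)
    (T : ℝ) (w : Fin n → ℝ) (ν : Fin m → ℝ) : Set (Fin m → ℝ) :=
  {v | ∃ x : ℝ → Fin (m + 1) → ℝ, x 0 = Fin.snoc v 1 ∧
    (∀ s : ℝ, 0 ≤ s → HasDerivAt x (Fq I AV π AC T w (x s)) s) ∧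
    Filter.Tendsto x Filter.atTop (nhds (Fin.snoc ν 0))}

/-- `S_T` as a subset of `ℝ^m × Ker A^D`: pairs `(v,w)` whose (Ric-V) solution stays
finite for all `t < T`, i.e. `T*(v,w) ≥ T`. -/
def STP {m n : ℕ} (I : Finset (Fin m)) (AV : Matrix (Fin m) (Fin m) ℝ)
    (π : Fin m → Matrix (Fin n) (Fin n) ℝ) (AC : Matrix (Fin m) (Fin n) ℝ)
    (AD : Matrix (Fin n) (Fin n) ℝ) (T : ℝ) :
    Set {p : (Fin m → ℝ) × (Fin n → ℝ) // AD.mulVec p.2 = 0} :=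
  {p | ∃ y : ℝ → Fin m → ℝ, y 0 = p.val.1 ∧
    ∀ t : ℝ, 0 ≤ t → t < T → HasDerivAt y (fRic I AV π AC (y t) p.val.2) t}

open scoped ENNReal

/-- `y` solves `ẏ = F(y)` on `[0,T)`. -/
def SolOn {d : ℕ} (F : (Fin d → ℝ) → (Fin d → ℝ)) (y : ℝ → Fin d → ℝ) (T : ℝ≥0∞) : Prop :=
  ∀ t : ℝ, 0 ≤ t → ENNReal.ofReal t < T → HasDerivAt y (F (y t)) t

/-- `y` is a maximal solution of `ẏ = F(y)`, with lifetime `T`: it is a solution on `[0,T)`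
and no solution with the same initial value exists on a longer interval. -/
def IsMaxSol {d : ℕ} (F : (Fin d → ℝ) → (Fin d → ℝ)) (y : ℝ → Fin d → ℝ) (T : ℝ≥0∞) : Prop :=
  0 < T ∧ SolOn F y T ∧
    ∀ (z : ℝ → Fin d → ℝ) (T' : ℝ≥0∞), T < T' → SolOn F z T' → z 0 ≠ y 0

/-- Lyapunov stability of an equilibrium point. -/
def StablePt {d : ℕ} (F : (Fin d → ℝ) → (Fin d → ℝ)) (ν : Fin d → ℝ) : Prop :=
  ∀ ε : ℝ, 0 < ε → ∃ δ : ℝ, 0 < δ ∧ ∀ (y : ℝ → Fin d → ℝ) (T : ℝ≥0∞),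
    IsMaxSol F y T → ‖y 0 - ν‖ < δ →
      ∀ t : ℝ, 0 < t → ENNReal.ofReal t < T → ‖y t - ν‖ < ε

/-- Asymptotic stability of an equilibrium point. -/
def AsympStablePt {d : ℕ} (F : (Fin d → ℝ) → (Fin d → ℝ)) (ν : Fin d → ℝ) : Prop :=
  StablePt F ν ∧ ∃ δ : ℝ, 0 < δ ∧ ∀ (y : ℝ → Fin d → ℝ) (T : ℝ≥0∞),
    IsMaxSol F y T → ‖y 0 - ν‖ < δ → T = ⊤ ∧ Filter.Tendsto y Filter.atTop (nhds ν)

/-! At an equilibrium the last coordinate vanishes, which decouples the others into the scalar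
equations `(T/2) v² - v = 0` (for `i ∈ I`) and `-v = 0`. The vector field is `-x` plus a
homogeneous quadratic, so an exact Taylor identity gives its Jacobian; at an equilibrium this is
upper triangular with diagonal entries `T ν_i - 1 = ±1` and `-1`.

Since the linearisation at the origin is `-id`, a fencing argument for `eᵗ x(t)` gives decay like
`e^{-t/2}` near the origin, and a maximal solution that stays bounded is global because
Picard–Lindelöf gives a uniform existence time on a ball. At any other equilibrium some
`ν_j = 2/T`, and the logistic solution `x_j(t) = 1 / (T/2 + a eᵗ)` (other coordinates held
fixed), started arbitrarily close to `2/T`, tends to `0`, so that equilibrium is not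
asymptotically stable. -/

open Set Metric
open scoped NNReal

section Analysis

variable {E G : Type*} [NormedAddCommGroup E] [NormedSpace ℝ E]
  [NormedAddCommGroup G] [NormedSpace ℝ G]

lemma exists_norm_le_mul_sq_of_homogeneous [ProperSpace E] {N : E → G} (hN : Continuous N)
    (hhom : ∀ (t : ℝ) z, N (t • z) = t ^ 2 • N z) : ∃ C, ∀ z, ‖N z‖ ≤ C * ‖z‖ ^ 2 := by
  obtain ⟨C, hC⟩ := (isCompact_sphere (0 : E) 1).exists_bound_of_continuousOn hN.continuousOn
  refine ⟨C, fun z => ?_⟩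
  rcases eq_or_ne z 0 with rfl | hz
  · simpa using hhom 0 0
  have hu : ‖z‖⁻¹ • z ∈ sphere (0 : E) 1 := by simp [norm_smul, hz]
  calc ‖N z‖ = ‖z‖ ^ 2 * ‖N (‖z‖⁻¹ • z)‖ := by
        rw [hhom, norm_smul, ← mul_assoc, norm_pow, norm_inv, norm_norm, ← mul_pow,
          mul_inv_cancel₀ (norm_ne_zero_iff.2 hz), one_pow, one_mul]
    _ ≤ ‖z‖ ^ 2 * C := by gcongr; exact hC _ hu
    _ = C * ‖z‖ ^ 2 := mul_comm _ _

lemma hasFDerivAt_of_eq_add_of_norm_le_mul_sq {f N : E → G} {L : E →L[ℝ] G} {p : E} {C : ℝ}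
    (hf : ∀ z, f (p + z) = f p + L z + N z) (hN : ∀ z, ‖N z‖ ≤ C * ‖z‖ ^ 2) :
    HasFDerivAt f L p := by
  rw [hasFDerivAt_iff_isLittleO_nhds_zero]
  have hrem : (fun z => f (p + z) - f p - L z) = N := by
    funext z
    rw [hf]
    abel
  rw [hrem]
  refine (Asymptotics.IsBigO.of_bound C (Eventually.of_forall fun z => ?_)).trans_isLittleO
    (Asymptotics.isLittleO_norm_pow_id one_lt_two)
  simpa using hN z

lemma hasDerivAt_ite_le {f g : ℝ → E} {f' : E} {a : ℝ} (hf : HasDerivWithinAt f f' (Iic a) a)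
    (hg : HasDerivWithinAt g f' (Ici a) a) (hfg : f a = g a) :
    HasDerivAt (fun t => if t ≤ a then f t else g t) f' a := by
  have hl : HasDerivWithinAt (fun t => if t ≤ a then f t else g t) f' (Iic a) a :=
    hf.congr (fun t ht => if_pos ht) (if_pos le_rfl)
  have hr : HasDerivWithinAt (fun t => if t ≤ a then f t else g t) f' (Ici a) a := by
    refine hg.congr (fun t (ht : a ≤ t) => ?_) (by simp [hfg])
    split_ifs with h
    · rw [le_antisymm h ht, hfg]
    · rfl
  simpa [Iic_union_Ici] using hl.union hr

/-- Fencing `eᵗ y(t)` by `r e^{t/2}`: where the two meet, `‖y t‖ ≤ r`, so the hypothesis makes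
`eᵗ y(t)` grow strictly slower than the fence. -/
lemma norm_le_mul_exp_of_norm_add_lt {F : E → E} {r b : ℝ} (hr : 0 < r)
    (hF : ∀ x, x ≠ 0 → ‖x‖ ≤ r → ‖F x + x‖ < ‖x‖ / 2) {y : ℝ → E}
    (hy : ∀ t ∈ Icc 0 b, HasDerivAt y (F (y t)) t) (hy0 : ‖y 0‖ ≤ r) :
    ∀ t ∈ Icc 0 b, ‖y t‖ ≤ r * Real.exp (-(t / 2)) := by
  have hnorm : ∀ t (v : E), ‖Real.exp t • v‖ = Real.exp t * ‖v‖ := fun t v => by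
    rw [norm_smul, Real.norm_eq_abs, Real.abs_exp]
  have hfence := image_norm_le_of_norm_deriv_right_lt_deriv_boundary
    (f := fun t => Real.exp t • y t) (f' := fun t => Real.exp t • (F (y t) + y t))
    (B := fun t => r * Real.exp (t / 2)) (B' := fun t => r * Real.exp (t / 2) / 2)
    (fun t ht => (Real.continuous_exp.continuousAt.smul (hy t ht).continuousAt).continuousWithinAt)
    (fun t ht => ((Real.hasDerivAt_exp t).smul (hy t (Ico_subset_Icc_self ht))).hasDerivWithinAt
      |>.congr_deriv (by rw [smul_add, add_comm]))
    (by simpa using hy0)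
    (fun t => (((hasDerivAt_id t).div_const 2).exp.const_mul r).congr_deriv
      (by simp only [id]; ring))
    (fun t ht hyt => by
      rw [hnorm] at hyt
      have hpos : 0 < ‖y t‖ := pos_of_mul_pos_right (hyt ▸ by positivity) (Real.exp_pos t).le
      have hle : ‖y t‖ ≤ r := by
        have : Real.exp (t / 2) ≤ Real.exp t := Real.exp_le_exp.2 (by linarith [ht.1])
        nlinarith [Real.exp_pos t]
      calc ‖Real.exp t • (F (y t) + y t)‖ = Real.exp t * ‖F (y t) + y t‖ := hnorm _ _
        _ < Real.exp t * (‖y t‖ / 2) :=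
          mul_lt_mul_of_pos_left (hF _ (norm_pos_iff.1 hpos) hle) (Real.exp_pos t)
        _ = r * Real.exp (t / 2) / 2 := by rw [← hyt]; ring)
  intro t ht
  have h := hfence ht
  rw [hnorm, show Real.exp (t / 2) = Real.exp t * Real.exp (-(t / 2)) by
    rw [← Real.exp_add]; ring_nf] at h
  nlinarith [Real.exp_pos t]

end Analysis

section ODE

lemma LocallyLipschitz.exists_forall_mem_closedBall_exists_eq_forall_mem_Icc_hasDerivWithinAt
    {E : Type*} [NormedAddCommGroup E] [NormedSpace ℝ E] [ProperSpace E] {F : E → E}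
    (hF : LocallyLipschitz F) (R : ℝ≥0) :
    ∃ ε > 0, ∀ x ∈ closedBall (0 : E) R, ∀ t₀ : ℝ, ∃ α : ℝ → E, α t₀ = x ∧
      ∀ t ∈ Icc (t₀ - ε) (t₀ + ε), HasDerivWithinAt α (F (α t)) (Icc (t₀ - ε) (t₀ + ε)) t := by
  obtain ⟨K, hK⟩ := hF.locallyLipschitzOn.exists_lipschitzOnWith_of_compact
    (isCompact_closedBall (0 : E) (R + 1 : ℝ≥0))
  obtain ⟨L, hL⟩ := (isCompact_closedBall (0 : E) (R + 1 : ℝ≥0)).exists_bound_of_continuousOn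
    hF.continuous.continuousOn
  refine ⟨1 / (L.toNNReal + 1), by positivity, fun x hx t₀ => ?_⟩
  have hpl : IsPicardLindelof (fun _ => F)
      (tmin := t₀ - 1 / (L.toNNReal + 1)) (tmax := t₀ + 1 / (L.toNNReal + 1))
      ⟨t₀, by constructor <;> linarith [one_div_pos.2 (by positivity : (0 : ℝ) < L.toNNReal + 1)]⟩
      0 (R + 1) R L.toNNReal K := by
    refine IsPicardLindelof.of_time_independent
      (fun y hy => (hL y hy).trans (Real.le_coe_toNNReal L)) hK ?_
    simp only [add_sub_cancel_left, sub_sub_cancel, max_self, NNReal.coe_add, NNReal.coe_one]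
    rw [mul_one_div, div_le_one (by positivity)]
    linarith
  exact hpl.exists_eq_forall_mem_Icc_hasDerivWithinAt hx

variable {d : ℕ} {F : (Fin d → ℝ) → (Fin d → ℝ)}

lemma SolOn.hasDerivAt_of_mem_Icc {y : ℝ → Fin d → ℝ} {T : ℝ≥0∞} (hy : SolOn F y T) {b : ℝ}
    (hb : ENNReal.ofReal b < T) : ∀ t ∈ Icc 0 b, HasDerivAt y (F (y t)) t := fun t ht =>
  hy t ht.1 ((ENNReal.ofReal_le_ofReal ht.2).trans_lt hb)

lemma solOn_ite_le {y z : ℝ → Fin d → ℝ} {t₁ ε : ℝ} (ht₁ : 0 ≤ t₁) (hε : 0 < ε)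
    (hy : ∀ t ∈ Icc 0 t₁, HasDerivAt y (F (y t)) t)
    (hz : ∀ t ∈ Icc (t₁ - ε) (t₁ + ε), HasDerivWithinAt z (F (z t)) (Icc (t₁ - ε) (t₁ + ε)) t)
    (hzy : z t₁ = y t₁) :
    SolOn F (fun t => if t ≤ t₁ then y t else z t) (ENNReal.ofReal (t₁ + ε)) := by
  intro t ht htε
  rw [ENNReal.ofReal_lt_ofReal_iff (by positivity)] at htε
  beta_reduce
  rcases lt_trichotomy t t₁ with hlt | rfl | hgt
  · rw [if_pos hlt.le]
    exact (hy t ⟨ht, hlt.le⟩).congr_of_eventuallyEq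
      (eventuallyEq_of_mem (Iio_mem_nhds hlt) fun s hs => if_pos (le_of_lt hs))
  · rw [if_pos le_rfl]
    refine hasDerivAt_ite_le (hy t ⟨ht, le_rfl⟩).hasDerivWithinAt ?_ hzy.symm
    rw [← hzy]
    exact (hz t ⟨by linarith, by linarith⟩).mono_of_mem_nhdsWithin
      (Icc_mem_nhdsGE_of_mem ⟨by linarith, by linarith⟩)
  · rw [if_neg (not_le.2 hgt)]
    exact ((hz t ⟨by linarith, htε.le⟩).hasDerivAt (Icc_mem_nhds (by linarith) htε))
      |>.congr_of_eventuallyEq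
        (eventuallyEq_of_mem (Ioi_mem_nhds hgt) fun s hs => if_neg (not_le.2 hs))

theorem IsMaxSol.eq_top_of_norm_le (hF : LocallyLipschitz F) {y : ℝ → Fin d → ℝ}
    {T : ℝ≥0∞} (hy : IsMaxSol F y T) {R : ℝ≥0}
    (hR : ∀ t, 0 ≤ t → ENNReal.ofReal t < T → ‖y t‖ ≤ R) : T = ⊤ := by
  by_contra hT
  obtain ⟨hTpos, hsol, hmax⟩ := hy
  set τ := T.toReal
  have hτ : 0 < τ := ENNReal.toReal_pos hTpos.ne' hT
  have hTτ : T = ENNReal.ofReal τ := (ENNReal.ofReal_toReal hT).symm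
  obtain ⟨ε, hε, hloc⟩ :=
    hF.exists_forall_mem_closedBall_exists_eq_forall_mem_Icc_hasDerivWithinAt R
  set t₁ := max 0 (τ - ε / 2)
  have ht₁ : 0 ≤ t₁ := le_max_left _ _
  have ht₁T : ENNReal.ofReal t₁ < T := by
    rw [hTτ]
    exact (ENNReal.ofReal_lt_ofReal_iff hτ).2 (max_lt hτ (by linarith))
  obtain ⟨z, hzt₁, hz⟩ := hloc (y t₁) (mem_closedBall_zero_iff.2 (hR t₁ ht₁ ht₁T)) t₁
  refine hmax _ _ ?_ (solOn_ite_le ht₁ hε (hsol.hasDerivAt_of_mem_Icc ht₁T) hz hzt₁) (if_pos ht₁)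
  rw [hTτ]
  exact (ENNReal.ofReal_lt_ofReal_iff (by positivity)).2 (by linarith [le_max_right 0 (τ - ε / 2)])

theorem asympStablePt_zero_of_hasFDerivAt_neg_id (hF : LocallyLipschitz F) (h0 : F 0 = 0)
    (hF' : HasFDerivAt F (-ContinuousLinearMap.id ℝ (Fin d → ℝ)) 0) : AsympStablePt F 0 := by
  obtain ⟨r, hr, hcontr⟩ : ∃ r > 0, ∀ x, x ≠ 0 → ‖x‖ ≤ r → ‖F x + x‖ < ‖x‖ / 2 := by
    obtain ⟨ε, hε, hball⟩ := Metric.eventually_nhds_iff.1 (hF'.isLittleO.def (c := 1 / 4)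
      (by norm_num))
    refine ⟨ε / 2, by positivity, fun x hx hxr => ?_⟩
    have hx' := hball (y := x) (by rw [dist_zero_right]; linarith)
    simp only [h0, sub_zero, neg_apply, ContinuousLinearMap.id_apply, sub_neg_eq_add] at hx'
    linarith [norm_pos_iff.2 hx]
  have hdecay : ∀ {y : ℝ → Fin d → ℝ} {T : ℝ≥0∞}, IsMaxSol F y T → ∀ {ρ : ℝ}, 0 < ρ → ρ ≤ r →
      ‖y 0‖ ≤ ρ → ∀ t, 0 ≤ t → ENNReal.ofReal t < T → ‖y t‖ ≤ ρ * Real.exp (-(t / 2)) :=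
    fun hy _ hρ hρr hy0 t ht htT => norm_le_mul_exp_of_norm_add_lt hρ
      (fun x hx hxρ => hcontr x hx (hxρ.trans hρr)) (hy.2.1.hasDerivAt_of_mem_Icc htT) hy0 t
      ⟨ht, le_rfl⟩
  refine ⟨fun ε hε => ⟨min r ε, lt_min hr hε, fun y T hy hy0 t ht htT => ?_⟩, r, hr,
    fun y T hy hy0 => ?_⟩
  · rw [sub_zero] at hy0 ⊢
    calc ‖y t‖ ≤ min r ε * Real.exp (-(t / 2)) :=
          hdecay hy (lt_min hr hε) (min_le_left _ _) hy0.le t ht.le htT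
      _ < min r ε := mul_lt_of_lt_one_right (lt_min hr hε) (Real.exp_lt_one_iff.2 (by linarith))
      _ ≤ ε := min_le_right _ _
  · rw [sub_zero] at hy0
    have hbound := hdecay hy hr le_rfl hy0.le
    have hT : T = ⊤ := hy.eq_top_of_norm_le hF (R := r.toNNReal) fun t ht htT =>
      (hbound t ht htT).trans <| (mul_le_of_le_one_right hr.le
        (Real.exp_le_one_iff.2 (by linarith))).trans (Real.le_coe_toNNReal r)
    refine ⟨hT, squeeze_zero_norm'
      (eventually_atTop.2 ⟨0, fun t ht => by simpa using hbound t ht (by simp [hT])⟩) ?_⟩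
    simpa using (Real.tendsto_exp_neg_atTop_nhds_zero.comp
      (tendsto_id.atTop_div_const two_pos)).const_mul r

end ODE

lemma Matrix.IsUpperTriangular.exists_eq_diag_of_mem_spectrum {ι K : Type*} [Fintype ι]
    [DecidableEq ι] [LinearOrder ι] [Field K] {M : Matrix ι ι K} (hM : M.IsUpperTriangular)
    {μ : K} (hμ : μ ∈ spectrum K M) : ∃ i, μ = M i i := by
  rw [Matrix.mem_spectrum_iff_isRoot_charpoly, Matrix.charpoly_of_isUpperTriangular M hM,
    Polynomial.isRoot_prod] at hμ
  obtain ⟨i, -, hi⟩ := hμ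
  exact ⟨i, by simpa [sub_eq_zero] using hi⟩

lemma hasDerivAt_inv_half_add_mul_exp {T a : ℝ} (hT : 0 < T) (ha : 0 ≤ a) (t : ℝ) :
    HasDerivAt (fun s => (T / 2 + a * Real.exp s)⁻¹)
      (T / 2 * (T / 2 + a * Real.exp t)⁻¹ ^ 2 - (T / 2 + a * Real.exp t)⁻¹) t := by
  have hu : T / 2 + a * Real.exp t ≠ 0 := by positivity
  refine (((Real.hasDerivAt_exp t).const_mul a).const_add (T / 2)).inv hu |>.congr_deriv ?_
  field_simp
  ring

section QuadODE

open Finset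

variable {m n : ℕ} {I : Finset (Fin m)} {AV : Matrix (Fin m) (Fin m) ℝ}
  {π : Fin m → Matrix (Fin n) (Fin n) ℝ} {AC : Matrix (Fin m) (Fin n) ℝ} {T : ℝ} {w : Fin n → ℝ}

def lowerRowSum (AV : Matrix (Fin m) (Fin m) ℝ) (i : Fin m) : (Fin (m + 1) → ℝ) →ₗ[ℝ] ℝ :=
  ∑ k ∈ univ.filter (· ≤ i), AV i k • LinearMap.proj k.castSucc

lemma lowerRowSum_apply (i : Fin m) (x : Fin (m + 1) → ℝ) :
    lowerRowSum AV i x = ∑ k ∈ univ.filter (· ≤ i), AV i k * x k.castSucc := by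
  simp [lowerRowSum]

lemma Fq_castSucc (x : Fin (m + 1) → ℝ) (i : Fin m) :
    Fq I AV π AC T w x i.castSucc =
      T / 2 * x i.castSucc ^ 2 * (if i ∈ I then 1 else 0) - x i.castSucc
        + T * lowerRowSum AV i x * x (Fin.last m) + T * x (Fin.last m) ^ 2 * gfun π AC w i := by
  simp [Fq, lowerRowSum_apply]

lemma Fq_last (x : Fin (m + 1) → ℝ) : Fq I AV π AC T w x (Fin.last m) = -x (Fin.last m) := by
  simp [Fq]

lemma Fq_castSucc_of_last_eq_zero {x : Fin (m + 1) → ℝ} (hx : x (Fin.last m) = 0) (i : Fin m) :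
    Fq I AV π AC T w x i.castSucc =
      T / 2 * x i.castSucc ^ 2 * (if i ∈ I then 1 else 0) - x i.castSucc := by
  simp [Fq_castSucc, hx]

lemma half_mul_sq_sub_eq_zero_iff {T a : ℝ} (hT : T ≠ 0) :
    T / 2 * a ^ 2 - a = 0 ↔ a = 0 ∨ a = 2 / T := by
  have hlin : T / 2 * a = 1 ↔ a * T = 2 := ⟨fun h => by linarith, fun h => by linarith⟩
  rw [show T / 2 * a ^ 2 - a = a * (T / 2 * a - 1) by ring, mul_eq_zero, sub_eq_zero, hlin,
    eq_div_iff hT]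

lemma Fq_eq_zero_iff (hT : T ≠ 0) (x : Fin (m + 1) → ℝ) :
    (∀ i, Fq I AV π AC T w x i = 0) ↔
      (x (Fin.last m) = 0 ∧ ∀ i : Fin m,
        (i ∈ I → (x i.castSucc = 0 ∨ x i.castSucc = 2 / T)) ∧ (i ∉ I → x i.castSucc = 0)) := by
  rw [Fin.forall_fin_succ', Fq_last, neg_eq_zero, and_comm]
  refine and_congr_right fun hx => forall_congr' fun i => ?_
  rw [Fq_castSucc_of_last_eq_zero hx]
  by_cases hi : i ∈ I <;> simp [hi, half_mul_sq_sub_eq_zero_iff hT]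

lemma contDiff_Fq {k : WithTop ℕ∞} : ContDiff ℝ k (Fq I AV π AC T w) := by
  refine contDiff_pi.2 fun i => ?_
  by_cases hi : (i : ℕ) < m
  · simp only [Fq, hi, dif_pos]
    fun_prop
  · simp only [Fq, hi, dif_neg, not_false_eq_true]
    fun_prop

lemma Fq_add_smul_self (t : ℝ) (z : Fin (m + 1) → ℝ) :
    Fq I AV π AC T w (t • z) + t • z = t ^ 2 • (Fq I AV π AC T w z + z) := by
  ext i
  induction i using Fin.lastCases with
  | last => simp [Fq_last]
  | cast i =>
    simp only [Pi.add_apply, Pi.smul_apply, smul_eq_mul, Fq_castSucc, map_smul]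
    ring

variable (I AV π AC T w) in
def jacobianFq (p : Fin (m + 1) → ℝ) : (Fin (m + 1) → ℝ) →L[ℝ] (Fin (m + 1) → ℝ) :=
  LinearMap.toContinuousLinearMap
    { toFun := fun z => Fin.snoc (fun i : Fin m =>
        (T * p i.castSucc * (if i ∈ I then 1 else 0) - 1) * z i.castSucc
          + T * lowerRowSum AV i z * p (Fin.last m) + T * lowerRowSum AV i p * z (Fin.last m)
          + 2 * T * p (Fin.last m) * z (Fin.last m) * gfun π AC w i) (-z (Fin.last m))
      map_add' := fun z z' => by
        ext i
        induction i using Fin.lastCases with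
        | last => simp only [Fin.snoc_last, Pi.add_apply]; ring
        | cast i =>
          simp only [Fin.snoc_castSucc, Pi.add_apply, map_add]
          ring
      map_smul' := fun t z => by
        ext i
        induction i using Fin.lastCases with
        | last => simp
        | cast i =>
          simp only [Fin.snoc_castSucc, Pi.smul_apply, smul_eq_mul, RingHom.id_apply, map_smul]
          ring }

lemma jacobianFq_apply_castSucc (p z : Fin (m + 1) → ℝ) (i : Fin m) :
    jacobianFq I AV π AC T w p z i.castSucc =
      (T * p i.castSucc * (if i ∈ I then 1 else 0) - 1) * z i.castSucc
        + T * lowerRowSum AV i z * p (Fin.last m) + T * lowerRowSum AV i p * z (Fin.last m)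
        + 2 * T * p (Fin.last m) * z (Fin.last m) * gfun π AC w i := by
  simp [jacobianFq]

lemma jacobianFq_apply_last (p z : Fin (m + 1) → ℝ) :
    jacobianFq I AV π AC T w p z (Fin.last m) = -z (Fin.last m) := by
  simp [jacobianFq]

/-- The expansion is exact: its remainder `Fq z + z` is the homogeneous quadratic part. -/
lemma Fq_add (p z : Fin (m + 1) → ℝ) :
    Fq I AV π AC T w (p + z) =
      Fq I AV π AC T w p + jacobianFq I AV π AC T w p z + (Fq I AV π AC T w z + z) := by
  ext i
  induction i using Fin.lastCases with
  | last => simp only [Pi.add_apply, Fq_last, jacobianFq_apply_last]; ring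
  | cast i =>
    simp only [Pi.add_apply, Fq_castSucc, jacobianFq_apply_castSucc, map_add]
    ring

lemma hasFDerivAt_Fq (p : Fin (m + 1) → ℝ) :
    HasFDerivAt (Fq I AV π AC T w) (jacobianFq I AV π AC T w p) p := by
  obtain ⟨C, hC⟩ := exists_norm_le_mul_sq_of_homogeneous
    ((contDiff_Fq (k := 0)).continuous.add continuous_id) Fq_add_smul_self
  exact hasFDerivAt_of_eq_add_of_norm_le_mul_sq (Fq_add p) hC

lemma jacobianFq_zero : jacobianFq I AV π AC T w 0 = -ContinuousLinearMap.id ℝ _ := by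
  ext z i
  induction i using Fin.lastCases with
  | last => simp [jacobianFq_apply_last]
  | cast i => simp [jacobianFq_apply_castSucc]

variable (I AV π AC T w) in
lemma isUpperTriangular_toMatrix'_jacobianFq {p : Fin (m + 1) → ℝ} (hp : p (Fin.last m) = 0) :
    (LinearMap.toMatrix' (jacobianFq I AV π AC T w p).toLinearMap).IsUpperTriangular := by
  intro i j (hji : j < i)
  rw [LinearMap.toMatrix'_apply]
  induction i using Fin.lastCases with
  | last => simp [jacobianFq_apply_last, hji.ne]
  | cast i =>
    have hj : j ≠ Fin.last m := (hji.trans (Fin.castSucc_lt_last i)).ne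
    simp [jacobianFq_apply_castSucc, hp, hji.ne, hj]

lemma toMatrix'_jacobianFq_diag_eq_one_or_neg_one (hT : T ≠ 0) {x : Fin (m + 1) → ℝ}
    (hx : ∀ i, Fq I AV π AC T w x i = 0) (i : Fin (m + 1)) :
    LinearMap.toMatrix' (jacobianFq I AV π AC T w x).toLinearMap i i = 1 ∨
      LinearMap.toMatrix' (jacobianFq I AV π AC T w x).toLinearMap i i = -1 := by
  obtain ⟨hlast, hco⟩ := (Fq_eq_zero_iff hT x).1 hx
  rw [LinearMap.toMatrix'_apply]
  induction i using Fin.lastCases with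
  | last => simp [jacobianFq_apply_last]
  | cast i =>
    simp only [ContinuousLinearMap.coe_coe, jacobianFq_apply_castSucc, hlast, Pi.single_eq_same]
    by_cases hi : i ∈ I
    · rcases (hco i).1 hi with h | h
      · simp [hi, h]
      · left
        simp only [hi, h, if_true, mul_div_cancel₀ _ hT]
        norm_num
    · simp [hi, (hco i).2 hi]

lemma spectrum_fderiv_Fq (hT : T ≠ 0) {x : Fin (m + 1) → ℝ} (hx : ∀ i, Fq I AV π AC T w x i = 0) :
    ∀ μ ∈ spectrum ℂ
      ((LinearMap.toMatrix' (fderiv ℝ (fun z => Fq I AV π AC T w z) x).toLinearMap).map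
        Complex.ofReal), μ = 1 ∨ μ = -1 := by
  intro μ hμ
  rw [(hasFDerivAt_Fq x).fderiv] at hμ
  have htri := isUpperTriangular_toMatrix'_jacobianFq I AV π AC T w ((Fq_eq_zero_iff hT x).1 hx).1
  obtain ⟨i, rfl⟩ := Matrix.IsUpperTriangular.exists_eq_diag_of_mem_spectrum
    (fun i j hji => by simp [htri hji]) hμ
  rcases toMatrix'_jacobianFq_diag_eq_one_or_neg_one hT hx i with h | h <;> simp [h]

lemma Fq_update_castSucc {x : Fin (m + 1) → ℝ} (hx : ∀ i, Fq I AV π AC T w x i = 0) {j : Fin m}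
    (hj : j ∈ I) (v : ℝ) :
    Fq I AV π AC T w (Function.update x j.castSucc v) =
      Pi.single j.castSucc (T / 2 * v ^ 2 - v) := by
  have hlast : x (Fin.last m) = 0 := by simpa [Fq_last] using hx (Fin.last m)
  have hlast' : Function.update x j.castSucc v (Fin.last m) = 0 := by
    rw [Function.update_of_ne (Fin.castSucc_lt_last j).ne', hlast]
  ext i
  induction i using Fin.lastCases with
  | last => rw [Fq_last, hlast', neg_zero, Pi.single_eq_of_ne (Fin.castSucc_lt_last j).ne']
  | cast i =>
    rw [Fq_castSucc_of_last_eq_zero hlast']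
    rcases eq_or_ne i j with rfl | hij
    · simp [hj]
    · have hij' : i.castSucc ≠ j.castSucc := (Fin.castSucc_injective m).ne hij
      rw [Function.update_of_ne hij', Pi.single_eq_of_ne hij', ← Fq_castSucc_of_last_eq_zero hlast,
        hx]

lemma exists_mem_castSucc_eq_two_div_of_ne_zero (hT : T ≠ 0) {x : Fin (m + 1) → ℝ}
    (hx : ∀ i, Fq I AV π AC T w x i = 0) (hne : x ≠ 0) : ∃ j ∈ I, x j.castSucc = 2 / T := by
  obtain ⟨hlast, hco⟩ := (Fq_eq_zero_iff hT x).1 hx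
  by_contra! h
  refine hne (funext fun i => ?_)
  induction i using Fin.lastCases with
  | last => exact hlast
  | cast i =>
    by_cases hi : i ∈ I
    · exact ((hco i).1 hi).resolve_right (h i hi)
    · exact (hco i).2 hi

lemma eq_zero_of_asympStablePt_Fq (hT : 0 < T) {x : Fin (m + 1) → ℝ}
    (hx : ∀ i, Fq I AV π AC T w x i = 0) (hs : AsympStablePt (fun z => Fq I AV π AC T w z) x) :
    x = 0 := by
  by_contra hne
  obtain ⟨j, hjI, hj⟩ := exists_mem_castSucc_eq_two_div_of_ne_zero hT.ne' hx hne
  obtain ⟨-, δ, hδ, hattr⟩ := hs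
  obtain ⟨y₀, hy₀, hy₀T, hy₀δ⟩ : ∃ y₀ : ℝ, 0 < y₀ ∧ y₀ < 2 / T ∧ 2 / T - y₀ < δ :=
    ⟨2 / T - min δ (2 / T) / 2, by linarith [min_le_right δ (2 / T), div_pos two_pos hT],
      by linarith [lt_min hδ (div_pos two_pos hT)], by linarith [min_le_left δ (2 / T)]⟩
  set a := y₀⁻¹ - T / 2
  have ha : 0 < a := by
    rw [sub_pos, ← inv_div, inv_lt_inv₀ (by positivity) hy₀]
    exact hy₀T
  set y : ℝ → Fin (m + 1) → ℝ := fun t => Function.update x j.castSucc (T / 2 + a * Real.exp t)⁻¹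
  have hsol : ∀ t, HasDerivAt y (Fq I AV π AC T w (y t)) t := fun t => by
    refine ((hasDerivAt_update x j.castSucc _).scomp t
      (hasDerivAt_inv_half_add_mul_exp hT ha.le t)).congr_deriv ?_
    rw [Fq_update_castSucc hx hjI, ← Pi.single_smul, smul_eq_mul, mul_one]
  have hmax : IsMaxSol (fun z => Fq I AV π AC T w z) y ⊤ :=
    ⟨ENNReal.zero_lt_top, fun t _ _ => hsol t, fun _ _ h => (not_top_lt h).elim⟩
  have hnear : ‖y 0 - x‖ < δ := by
    refine (pi_norm_lt_iff hδ).2 fun i => ?_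
    rcases eq_or_ne i j.castSucc with rfl | hi
    · simp only [y, a, Real.exp_zero, mul_one, add_sub_cancel, inv_inv, Pi.sub_apply,
        Function.update_self, hj, Real.norm_eq_abs]
      rw [abs_sub_comm, abs_of_pos (sub_pos.2 hy₀T)]
      exact hy₀δ
    · simp [y, Function.update_of_ne hi, hδ]
  have hlim := tendsto_pi_nhds.1 (hattr y ⊤ hmax hnear).2 j.castSucc
  have hdecay : Tendsto (fun t => y t j.castSucc) atTop (𝓝 0) := by
    simp only [y, Function.update_self]
    exact tendsto_inv_atTop_zero.comp <|
      tendsto_atTop_add_const_left _ (T / 2) (Real.tendsto_exp_atTop.const_mul_atTop ha)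
  exact (div_pos two_pos hT).ne' (hj ▸ tendsto_nhds_unique hlim hdecay)

end QuadODE

theorem stmt12_general (m n : ℕ)
    (I : Finset (Fin m))
    (AV : Matrix (Fin m) (Fin m) ℝ)
    (π : Fin m → Matrix (Fin n) (Fin n) ℝ)
    (AC : Matrix (Fin m) (Fin n) ℝ)
    (T : ℝ) (hT : 0 < T) (w : Fin n → ℝ) :
    (∀ x : Fin (m + 1) → ℝ,
      (∀ i, Fq I AV π AC T w x i = 0) ↔
        (x (Fin.last m) = 0 ∧ ∀ i : Fin m,
          (i ∈ I → (x i.castSucc = 0 ∨ x i.castSucc = 2 / T)) ∧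
          (i ∉ I → x i.castSucc = 0)))
    ∧ (∀ x : Fin (m + 1) → ℝ, (∀ i, Fq I AV π AC T w x i = 0) →
        ∀ μ ∈ spectrum ℂ
          ((LinearMap.toMatrix'
            (fderiv ℝ (fun z => Fq I AV π AC T w z) x).toLinearMap).map Complex.ofReal),
          μ = 1 ∨ μ = -1)
    ∧ AsympStablePt (fun z => Fq I AV π AC T w z) 0
    ∧ (∀ x : Fin (m + 1) → ℝ, (∀ i, Fq I AV π AC T w x i = 0) →
        AsympStablePt (fun z => Fq I AV π AC T w z) x → x = 0) := by
  have hzero : Fq I AV π AC T w 0 = 0 :=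
    funext <| (Fq_eq_zero_iff hT.ne' 0).2 ⟨rfl, fun _ => ⟨fun _ => .inl rfl, fun _ => rfl⟩⟩
  refine ⟨Fq_eq_zero_iff hT.ne', fun x hx => spectrum_fderiv_Fq hT.ne' hx, ?_,
    fun x hx hs => eq_zero_of_asympStablePt_Fq hT hx hs⟩
  refine asympStablePt_zero_of_hasFDerivAt_neg_id (contDiff_Fq (k := 1)).locallyLipschitz hzero ?_
  rw [← jacobianFq_zero]
  exact hasFDerivAt_Fq 0

/-- the equilibrium points of (quadODE) are exactly the points `(ν,0)` with
`ν_i ∈ {0, 2/T}` for `i ∈ I` and `ν_i = 0` for `i ∉ I`; every equilibrium is hyperbolic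
(all eigenvalues of the Jacobian equal `1` or `-1`), and the origin is the unique
asymptotically stable equilibrium point. -/
theorem stmt12 (m n : ℕ) (hm : 1 ≤ m)
    (I : Finset (Fin m)) (hI : I.Nonempty)
    (AV : Matrix (Fin m) (Fin m) ℝ)
    (hAVtri : ∀ i k : Fin m, i < k → AV i k = 0)
    (hAVdiag : ∀ i : Fin m, AV i i < 0)
    (hAVoff : ∀ i k : Fin m, i ≠ k → 0 ≤ AV i k)
    (π : Fin m → Matrix (Fin n) (Fin n) ℝ)
    (hπ : ∀ i, (π i).PosSemidef)
    (AC : Matrix (Fin m) (Fin n) ℝ)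
    (T : ℝ) (hT : 0 < T) (w : Fin n → ℝ) :
    (∀ x : Fin (m + 1) → ℝ,
      (∀ i, Fq I AV π AC T w x i = 0) ↔
        (x (Fin.last m) = 0 ∧ ∀ i : Fin m,
          (i ∈ I → (x i.castSucc = 0 ∨ x i.castSucc = 2 / T)) ∧
          (i ∉ I → x i.castSucc = 0)))
    ∧ (∀ x : Fin (m + 1) → ℝ, (∀ i, Fq I AV π AC T w x i = 0) →
        ∀ μ ∈ spectrum ℂ
          ((LinearMap.toMatrix'
            (fderiv ℝ (fun z => Fq I AV π AC T w z) x).toLinearMap).map Complex.ofReal),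
          μ = 1 ∨ μ = -1)
    ∧ AsympStablePt (fun z => Fq I AV π AC T w z) 0
    ∧ (∀ x : Fin (m + 1) → ℝ, (∀ i, Fq I AV π AC T w x i = 0) →
        AsympStablePt (fun z => Fq I AV π AC T w z) x → x = 0) :=
  stmt12_general m n I AV π AC T hT w
end
end
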